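/- arXiv:1106.5092 — 3 statements merged into one kernel-verified Lean document; each statement's English description precedes it below -/
import Mathlib

section
/- For α ∈ Σ^ρ and a ∈ Σ^η, one has t_a* s_α = Σ s_β π(η_b(ρ_α(1))) t_b*, where the sum runs over all pairs (b,β) ∈ Σ^η×Σ^ρ with (α,b) ∈ Σ^{ρη} and κ(α,b) = (a,β); consequently s_α* t_a = Σ t_b π(ρ_β(η_a(1))) s_β* over the same index set. -/
open scoped Classical

variable (A : Type*) [NormedRing A] [StarRing A] [CStarRing A] [CompleteSpace A]
  [NormedAlgebra ℂ A] [StarModule ℂ A] [PartialOrder A] [StarOrderedRing A]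

/-- A `C*`-symbolic dynamical system `(A, ρ, S)`: a finite family of (central, essential,
faithful) `*`-endomorphisms of a unital `C*`-algebra `A` indexed by a finite alphabet `S`. -/
structure CSDS (S : Type*) [Fintype S] where
  ρ : S → A →⋆ₙₐ[ℂ] A
  unit_ne_zero : ∀ α, ρ α 1 ≠ 0
  central : ∀ α, ∀ x ∈ Set.center A, ρ α x ∈ Set.center A
  essential : 1 ≤ ∑ α, ρ α 1
  faithful : ∀ x : A, x ≠ 0 → ∃ α, ρ α x ≠ 0

/-- A `C*`-textile dynamical system `(A, ρ, η, Σ^ρ, Σ^η, κ)`. -/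
structure CTDS (Sρ Sη : Type*) [Fintype Sρ] [Fintype Sη] where
  rs : CSDS A Sρ
  es : CSDS A Sη
  κ : {p : Sρ × Sη // ∃ x, es.ρ p.2 (rs.ρ p.1 x) ≠ 0} →
      {q : Sη × Sρ // ∃ x, rs.ρ q.2 (es.ρ q.1 x) ≠ 0}
  κ_bij : Function.Bijective κ
  commrel : ∀ p, ∀ x, es.ρ p.1.2 (rs.ρ p.1.1 x) = rs.ρ (κ p).1.2 (es.ρ (κ p).1.1 x)

variable {A}
variable {Sρ Sη : Type*} [Fintype Sρ] [Fintype Sη]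

namespace CTDS

/-- The alphabet `Σ_κ` of the textile system: pairs `(α, b) ∈ Σ^{ρη}`,
identified with quadruples `(α, b, a, β)` with `κ(α,b) = (a,β)`. -/
abbrev SigmaKappa (T : CTDS A Sρ Sη) : Type _ :=
  {p : Sρ × Sη // ∃ x, T.es.ρ p.2 (T.rs.ρ p.1 x) ≠ 0}

variable (T : CTDS A Sρ Sη)


noncomputable instance (T : CTDS A Sρ Sη) : Fintype T.SigmaKappa := Fintype.ofFinite _

end CTDS

variable {B : Type*} [NormedRing B] [StarRing B] [CStarRing B] [CompleteSpace B]
  [NormedAlgebra ℂ B] [StarModule ℂ B]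

/-!
Insert `1 = ∑_b t_b t_b*` to the right of `t_a* s_α`. If `(α, b) ∉ Σ^{ρη}` then `s_α t_b = 0`,
since `(s_α t_b)* (s_α t_b) = π(η_b(ρ_α(1))) = 0`. Otherwise `s_α t_b = t_{a'} s_β` with
`κ(α, b) = (a', β)`, and `t_a* t_{a'} = 0` unless `a' = a`: projections summing to `1` are
mutually orthogonal. For `a' = a`, `t_a* t_a = π(η_a(1))` and `π(x) s_β = s_β π(ρ_β(x))` turn the
term into `s_β π(ρ_β(η_a(1))) t_b* = s_β π(η_b(ρ_α(1))) t_b*`. The second identity is the adjoint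
of the first.
-/

section PartialIsometry

variable {R : Type*} [Ring R] [StarRing R]

theorem isStarProjection_mul_star_of_mul_star_mul_eq {u : R} (hu : u * star u * u = u) :
    IsStarProjection (u * star u) where
  isIdempotentElem := by rw [IsIdempotentElem, ← mul_assoc, hu]
  isSelfAdjoint := by rw [IsSelfAdjoint, star_mul, star_star]

theorem star_mul_eq_zero_of_mul_star_mul_mul_star_eq_zero {u v : R}
    (hu : u * star u * u = u) (hv : v * star v * v = v)
    (huv : u * star u * (v * star v) = 0) : star u * v = 0 := by
  have hu' : star u * (u * star u) = star u := by
    simpa only [star_mul, star_star, mul_assoc] using congrArg star hu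
  calc star u * v = star u * (u * star u) * (v * star v * v) := by rw [hu', hv]
    _ = star u * (u * star u * (v * star v)) * v := by simp only [mul_assoc]
    _ = 0 := by rw [huv, mul_zero, zero_mul]

theorem mul_eq_mul_star_mul_mul_of_commute {u x : R} (hu : u * star u * u = u)
    (hx : Commute x (u * star u)) : x * u = u * (star u * x * u) := by
  calc x * u = x * (u * star u) * u := by rw [mul_assoc x, hu]
    _ = u * (star u * x * u) := by rw [hx.eq]; simp only [mul_assoc]

end PartialIsometry

section CStarAlgebra

variable {E : Type*} [CStarAlgebra E] {ι : Type*} [Fintype ι]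

theorem IsStarProjection.mul_eq_zero_of_sum_eq_one [PartialOrder E] [StarOrderedRing E]
    {p : ι → E} (hp : ∀ i, IsStarProjection (p i)) (hsum : ∑ i, p i = 1) {i j : ι}
    (hij : i ≠ j) : p i * p j = 0 := by
  have hle : p i ≤ 1 - p j := by
    rw [le_sub_iff_add_le, ← hsum, ← Finset.sum_pair hij]
    exact Finset.sum_le_sum_of_subset_of_nonneg (Finset.subset_univ _)
      fun k _ _ => (hp k).nonneg
  have hmul := ((hp i).le_iff_mul_eq_left (hp j).one_sub).mp hle
  rwa [mul_sub, mul_one, sub_eq_self] at hmul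

theorem star_mul_eq_zero_of_sum_mul_star_eq_one {u : ι → E}
    (hu : ∀ i, u i * star (u i) * u i = u i) (hsum : ∑ i, u i * star (u i) = 1) {i j : ι}
    (hij : i ≠ j) : star (u i) * u j = 0 := by
  let := CStarAlgebra.spectralOrder E
  have := CStarAlgebra.spectralOrderedRing E
  exact star_mul_eq_zero_of_mul_star_mul_mul_star_eq_zero (hu i) (hu j) <|
    IsStarProjection.mul_eq_zero_of_sum_eq_one
      (fun k => isStarProjection_mul_star_of_mul_star_mul_eq (hu k)) hsum hij

end CStarAlgebra

theorem Fintype.sum_subtype_ite_fst_eq {ι κ M : Type*} [Fintype ι] [Fintype κ]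
    [AddCommMonoid M] {P : ι × κ → Prop} [Fintype (Subtype P)] {g : ι × κ → M}
    (hg : ∀ q, ¬P q → g q = 0) (i : ι) :
    ∑ p : Subtype P, (if p.1.1 = i then g p else 0) = ∑ k, g (i, k) := by
  calc ∑ p : Subtype P, (if p.1.1 = i then g p else 0)
      = ∑ q ∈ Finset.univ.filter P, if q.1 = i then g q else 0 :=
        (Finset.sum_subtype _ (by simp) fun q : ι × κ => if q.1 = i then g q else 0).symm
    _ = ∑ q, if q.1 = i then g q else 0 :=
        Finset.sum_filter_of_ne fun q _ hq => by_contra fun hPq => hq (by simp [hg q hPq])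
    _ = ∑ k, g (i, k) := by rw [Fintype.sum_prod_type, Finset.sum_comm]; simp

namespace CTDS

omit [CStarRing A] [CompleteSpace A] [StarModule ℂ A] [StarOrderedRing A]

variable (T : CTDS A Sρ Sη) (π : A →⋆ₐ[ℂ] B) {s : Sρ → B} {t : Sη → B}

omit [CompleteSpace B] [StarModule ℂ B] in
theorem mul_eq_zero_of_not_admissible
    (hs3 : ∀ (x : A) (α : Sρ), star (s α) * π x * s α = π (T.rs.ρ α x))
    (ht3 : ∀ (x : A) (a : Sη), star (t a) * π x * t a = π (T.es.ρ a x))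
    {α : Sρ} {b : Sη} (h : ¬∃ x, T.es.ρ b (T.rs.ρ α x) ≠ 0) : s α * t b = 0 := by
  refine (CStarRing.star_mul_self_eq_zero_iff _).mp ?_
  calc star (s α * t b) * (s α * t b) = star (t b) * (star (s α) * π 1 * s α) * t b := by
        rw [map_one, mul_one, star_mul]; simp only [mul_assoc]
    _ = 0 := by rw [hs3, ht3, not_exists_not.mp h 1, map_zero]

theorem star_mul_mul_mul_star_eq_ite
    (hspi : ∀ α, s α * star (s α) * s α = s α)
    (htpi : ∀ a, t a * star (t a) * t a = t a)
    (hs2 : ∀ (x : A) (α : Sρ), π x * (s α * star (s α)) = s α * star (s α) * π x)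
    (hs3 : ∀ (x : A) (α : Sρ), star (s α) * π x * s α = π (T.rs.ρ α x))
    (ht1 : ∑ b, t b * star (t b) = 1)
    (ht3 : ∀ (x : A) (a : Sη), star (t a) * π x * t a = π (T.es.ρ a x))
    (p : T.SigmaKappa) (hp : s p.1.1 * t p.1.2 = t (T.κ p).1.1 * s (T.κ p).1.2) (a : Sη) :
    star (t a) * s p.1.1 * (t p.1.2 * star (t p.1.2)) =
      if (T.κ p).1.1 = a then
        s (T.κ p).1.2 * π (T.es.ρ p.1.2 (T.rs.ρ p.1.1 1)) * star (t p.1.2)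
      else 0 := by
  let : CStarAlgebra B := ⟨⟩
  have hexpand : star (t a) * s p.1.1 * (t p.1.2 * star (t p.1.2)) =
      star (t a) * t (T.κ p).1.1 * s (T.κ p).1.2 * star (t p.1.2) := by
    rw [mul_assoc, ← mul_assoc (s _), hp]; simp only [mul_assoc]
  rw [hexpand]
  split_ifs with ha
  · calc star (t a) * t (T.κ p).1.1 * s (T.κ p).1.2 * star (t p.1.2)
        = π (T.es.ρ a 1) * s (T.κ p).1.2 * star (t p.1.2) := by
          rw [← ht3, map_one, mul_one, ha]
      _ = s (T.κ p).1.2 * π (T.rs.ρ (T.κ p).1.2 (T.es.ρ a 1)) * star (t p.1.2) := by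
          rw [mul_eq_mul_star_mul_mul_of_commute (hspi _) (hs2 _ _), hs3]
      _ = s (T.κ p).1.2 * π (T.es.ρ p.1.2 (T.rs.ρ p.1.1 1)) * star (t p.1.2) := by
          rw [T.commrel p 1, ha]
  · rw [star_mul_eq_zero_of_sum_mul_star_eq_one htpi ht1 (Ne.symm ha), zero_mul, zero_mul]

theorem star_mul_eq_sum
    (hspi : ∀ α, s α * star (s α) * s α = s α)
    (htpi : ∀ a, t a * star (t a) * t a = t a)
    (hs2 : ∀ (x : A) (α : Sρ), π x * (s α * star (s α)) = s α * star (s α) * π x)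
    (hs3 : ∀ (x : A) (α : Sρ), star (s α) * π x * s α = π (T.rs.ρ α x))
    (ht1 : ∑ b, t b * star (t b) = 1)
    (ht3 : ∀ (x : A) (a : Sη), star (t a) * π x * t a = π (T.es.ρ a x))
    (hst : ∀ p : T.SigmaKappa, s p.1.1 * t p.1.2 = t (T.κ p).1.1 * s (T.κ p).1.2)
    (α : Sρ) (a : Sη) :
    star (t a) * s α = ∑ p : T.SigmaKappa,
      if p.1.1 = α ∧ (T.κ p).1.1 = a then
        s (T.κ p).1.2 * π (T.es.ρ p.1.2 (T.rs.ρ α 1)) * star (t p.1.2)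
      else 0 := by
  calc star (t a) * s α = ∑ b, star (t a) * s α * (t b * star (t b)) := by
        rw [← Finset.mul_sum, ht1, mul_one]
    _ = ∑ p : T.SigmaKappa,
          if p.1.1 = α then star (t a) * s p.1.1 * (t p.1.2 * star (t p.1.2)) else 0 := by
        refine (Fintype.sum_subtype_ite_fst_eq
          (g := fun q => star (t a) * s q.1 * (t q.2 * star (t q.2))) (fun q hq => ?_) α).symm
        rw [mul_assoc, ← mul_assoc (s _), T.mul_eq_zero_of_not_admissible π hs3 ht3 hq,
          zero_mul, mul_zero]
    _ = _ := by
        refine Finset.sum_congr rfl fun p _ => ?_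
        rw [ite_and]
        refine ite_congr rfl (fun hα => ?_) fun _ => rfl
        subst hα
        exact T.star_mul_mul_mul_star_eq_ite π hspi htpi hs2 hs3 ht1 ht3 p (hst p) a

end CTDS

theorem tStar_mul_s_eq_sum_general
    (T : CTDS A Sρ Sη)
    (π : A →⋆ₐ[ℂ] B)
    (s : Sρ → B) (t : Sη → B)
    (hspi : ∀ α, s α * star (s α) * s α = s α)
    (htpi : ∀ a, t a * star (t a) * t a = t a)
    (hs2 : ∀ (x : A) (α : Sρ), π x * (s α * star (s α)) = s α * star (s α) * π x)
    (hs3 : ∀ (x : A) (α : Sρ), star (s α) * π x * s α = π (T.rs.ρ α x))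
    (ht1 : ∑ b, t b * star (t b) = 1)
    (ht3 : ∀ (x : A) (a : Sη), star (t a) * π x * t a = π (T.es.ρ a x))
    (hst : ∀ p : T.SigmaKappa, s p.1.1 * t p.1.2 = t (T.κ p).1.1 * s (T.κ p).1.2)
    (α : Sρ) (a : Sη) :
    star (t a) * s α =
      (∑ p : T.SigmaKappa,
        if p.1.1 = α ∧ (T.κ p).1.1 = a then
          s (T.κ p).1.2 * π (T.es.ρ p.1.2 (T.rs.ρ α 1)) * star (t p.1.2)
        else 0) ∧
    star (s α) * t a =
      (∑ p : T.SigmaKappa,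
        if p.1.1 = α ∧ (T.κ p).1.1 = a then
          t p.1.2 * π (T.rs.ρ (T.κ p).1.2 (T.es.ρ a 1)) * star (s (T.κ p).1.2)
        else 0) := by
  have hts := T.star_mul_eq_sum π hspi htpi hs2 hs3 ht1 ht3 hst α a
  refine ⟨hts, ?_⟩
  rw [← star_star (star (s α) * t a), star_mul, star_star, hts, star_sum]
  refine Finset.sum_congr rfl fun p _ => ?_
  split_ifs with hp
  · obtain ⟨hα, ha⟩ := hp
    rw [← hα, ← ha, ← T.commrel p 1]
    simp only [star_mul, star_star, ← map_star, star_one, mul_assoc]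
  · exact star_zero _

/-- `t_a* s_α = Σ s_β π(η_b(ρ_α(1))) t_b*` and
`s_α* t_a = Σ t_b π(ρ_β(η_a(1))) s_β*`, summing over pairs `(b,β)` with
`(α,b) ∈ Σ^{ρη}` and `κ(α,b) = (a,β)`. -/
theorem tStar_mul_s_eq_sum
    (T : CTDS A Sρ Sη)
    (π : A →⋆ₐ[ℂ] B) (hπ : Function.Injective π)
    (s : Sρ → B) (t : Sη → B)
    (hspi : ∀ α, s α * star (s α) * s α = s α)
    (htpi : ∀ a, t a * star (t a) * t a = t a)
    (hs1 : ∑ β, s β * star (s β) = 1)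
    (hs2 : ∀ (x : A) (α : Sρ), π x * (s α * star (s α)) = s α * star (s α) * π x)
    (hs3 : ∀ (x : A) (α : Sρ), star (s α) * π x * s α = π (T.rs.ρ α x))
    (ht1 : ∑ b, t b * star (t b) = 1)
    (ht2 : ∀ (x : A) (a : Sη), π x * (t a * star (t a)) = t a * star (t a) * π x)
    (ht3 : ∀ (x : A) (a : Sη), star (t a) * π x * t a = π (T.es.ρ a x))
    (hst : ∀ p : T.SigmaKappa, s p.1.1 * t p.1.2 = t (T.κ p).1.1 * s (T.κ p).1.2)
    (α : Sρ) (a : Sη) :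
    star (t a) * s α =
      (∑ p : T.SigmaKappa,
        if p.1.1 = α ∧ (T.κ p).1.1 = a then
          s (T.κ p).1.2 * π (T.es.ρ p.1.2 (T.rs.ρ α 1)) * star (t p.1.2)
        else 0) ∧
    star (s α) * t a =
      (∑ p : T.SigmaKappa,
        if p.1.1 = α ∧ (T.κ p).1.1 = a then
          t p.1.2 * π (T.rs.ρ (T.κ p).1.2 (T.es.ρ a 1)) * star (s (T.κ p).1.2)
        else 0) :=
  tStar_mul_s_eq_sum_general T π s t hspi htpi hs2 hs3 ht1 ht3 hst α a
end

section
/- For α ∈ Σ^ρ and a ∈ Σ^η, one has t_a t_a* s_α s_α* = Σ s_α t_b t_b* s_α*, where the sum runs over all b ∈ Σ^η such that (α,b) ∈ Σ^{ρη} and κ(α,b) = (a,β) for some β ∈ Σ^ρ. In particular, t_a t_a* commutes with s_α s_α*. -/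
open scoped Classical

variable (A : Type*) [NormedRing A] [StarRing A] [CStarRing A] [CompleteSpace A]
  [NormedAlgebra ℂ A] [StarModule ℂ A] [PartialOrder A] [StarOrderedRing A]

variable {A}
variable {Sρ Sη : Type*} [Fintype Sρ] [Fintype Sη]

variable {B : Type*} [NormedRing B] [StarRing B] [CStarRing B] [CompleteSpace B]
  [NormedAlgebra ℂ B] [StarModule ℂ B]

/-!
Write `e_b = t_b t_b*`. The `t_b` are partial isometries, so the `e_b` are projections, and as
they sum to `1` they are pairwise orthogonal: `e_i + e_j ≤ 1` forces
`0 ≤ e_i e_j e_i ≤ e_i (1 - e_i) e_i = 0`. Inserting `1 = ∑_b e_b` between `s_α` and `s_α*`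
splits `e_a s_α s_α*` into the terms `e_a s_α t_b t_b* s_α*`. If `(α, b) ∈ Σ^{ρη}` and
`κ(α, b) = (a', β)`, then `s_α t_b = t_{a'} s_β`, so `e_a s_α t_b` is `s_α t_b` or `0` according
as `a' = a`; otherwise `(s_α t_b)* (s_α t_b) = π(η_b(ρ_α(1))) = 0`, so `s_α t_b = 0`. The
resulting sum is self-adjoint, hence `e_a` commutes with `s_α s_α*`.
-/

theorem isStarProjection_mul_star_self {R : Type*} [Semigroup R] [StarMul R] {v : R}
    (hv : v * star v * v = v) : IsStarProjection (v * star v) where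
  isIdempotentElem := by rw [IsIdempotentElem, ← mul_assoc, hv]
  isSelfAdjoint := .mul_star_self v

theorem CStarRing.mul_eq_zero_of_star_mul_star_mul_self_mul_eq_zero {R : Type*}
    [NonUnitalNormedRing R] [StarRing R] [CStarRing R] {x y : R}
    (h : star y * (star x * x) * y = 0) : x * y = 0 := by
  rw [← CStarRing.star_mul_self_eq_zero_iff, star_mul, ← h]
  simp only [mul_assoc]

theorem IsStarProjection.mul_eq_zero_of_sum_eq_one_s6 {R ι : Type*} [NormedRing R] [StarRing R]
    [CStarRing R] [PartialOrder R] [StarOrderedRing R] [Fintype ι] {e : ι → R}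
    (he : ∀ i, IsStarProjection (e i)) (hsum : ∑ i, e i = 1) {i j : ι} (hij : i ≠ j) :
    e i * e j = 0 := by
  have hstar : ∀ k, star (e k) = e k := fun k => (he k).isSelfAdjoint.star_eq
  have hle : e j ≤ 1 - e i := by
    rw [le_sub_iff_add_le', ← hsum, ← Finset.sum_pair hij]
    exact Finset.sum_le_univ_sum_of_nonneg fun k => (he k).nonneg
  have hconj : star (e j * e i) * (e j * e i) = e i * e j * e i := by
    rw [star_mul, hstar, hstar, mul_assoc, ← mul_assoc (e j), (he j).isIdempotentElem.eq,
      mul_assoc]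
  have hzero : star (e j * e i) * (e j * e i) = 0 := by
    refine le_antisymm ?_ (star_mul_self_nonneg _)
    calc star (e j * e i) * (e j * e i) = star (e i) * e j * e i := by rw [hconj, hstar]
      _ ≤ star (e i) * (1 - e i) * e i := star_left_conjugate_le_conjugate hle _
      _ = 0 := by rw [mul_assoc, (he i).one_sub_mul_self, mul_zero]
  rw [← hstar i, ← hstar j, ← star_mul, (CStarRing.star_mul_self_eq_zero_iff _).mp hzero,
    star_zero]

theorem mul_star_mul_eq_ite_of_sum_mul_star_eq_one {ι : Type*} [Fintype ι] [DecidableEq ι]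
    {t : ι → B} (ht : ∀ i, t i * star (t i) * t i = t i) (hsum : ∑ i, t i * star (t i) = 1)
    (i j : ι) : t i * star (t i) * t j = if i = j then t j else 0 := by
  -- `B` carries no order of its own; the spectral order makes it a star-ordered ring.
  let _ : CStarAlgebra B := {}
  let _ : PartialOrder B := CStarAlgebra.spectralOrder B
  have _ : StarOrderedRing B := CStarAlgebra.spectralOrderedRing B
  split_ifs with hij
  · rw [← hij, ht]
  · have horth := IsStarProjection.mul_eq_zero_of_sum_eq_one_s6
      (fun k => isStarProjection_mul_star_self (ht k)) hsum hij
    rw [← ht j, ← mul_assoc, horth, zero_mul]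

theorem CTDS.mul_star_mul_conj_mul_star_eq_ite (T : CTDS A Sρ Sη) (π : A →⋆ₐ[ℂ] B)
    {s : Sρ → B} {t : Sη → B}
    (htpi : ∀ a, t a * star (t a) * t a = t a)
    (hs3 : ∀ (x : A) (α : Sρ), star (s α) * π x * s α = π (T.rs.ρ α x))
    (ht1 : ∑ b, t b * star (t b) = 1)
    (ht3 : ∀ (x : A) (a : Sη), star (t a) * π x * t a = π (T.es.ρ a x))
    (hst : ∀ p : T.SigmaKappa, s p.1.1 * t p.1.2 = t (T.κ p).1.1 * s (T.κ p).1.2)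
    (α : Sρ) (a b : Sη) :
    t a * star (t a) * (s α * (t b * star (t b)) * star (s α)) =
      if ∃ h : (∃ x, T.es.ρ b (T.rs.ρ α x) ≠ 0), (T.κ ⟨(α, b), h⟩).1.1 = a then
        s α * (t b * star (t b)) * star (s α)
      else 0 := by
  suffices t a * star (t a) * (s α * t b) =
      if ∃ h : (∃ x, T.es.ρ b (T.rs.ρ α x) ≠ 0), (T.κ ⟨(α, b), h⟩).1.1 = a then s α * t b
      else 0 by
    simp only [← mul_assoc] at this ⊢
    rw [this, ite_mul, ite_mul, zero_mul, zero_mul]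
  by_cases hαb : ∃ x, T.es.ρ b (T.rs.ρ α x) ≠ 0
  · simp only [exists_prop_of_true hαb]
    rw [hst ⟨(α, b), hαb⟩, ← mul_assoc, mul_star_mul_eq_ite_of_sum_mul_star_eq_one htpi ht1,
      ite_mul, zero_mul]
    exact if_congr eq_comm rfl rfl
  · have hρη : T.es.ρ b (T.rs.ρ α 1) = 0 := not_exists_not.mp hαb 1
    have hzero : s α * t b = 0 := by
      refine CStarRing.mul_eq_zero_of_star_mul_star_mul_self_mul_eq_zero ?_
      rw [← mul_one (star (s α)), ← map_one π, hs3, ht3, hρη, map_zero]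
    rw [if_neg fun ⟨h, _⟩ => hαb h, hzero, mul_zero]

theorem range_projections_commute_general
    (T : CTDS A Sρ Sη)
    (π : A →⋆ₐ[ℂ] B)
    (s : Sρ → B) (t : Sη → B)
    (htpi : ∀ a, t a * star (t a) * t a = t a)
    (hs3 : ∀ (x : A) (α : Sρ), star (s α) * π x * s α = π (T.rs.ρ α x))
    (ht1 : ∑ b, t b * star (t b) = 1)
    (ht3 : ∀ (x : A) (a : Sη), star (t a) * π x * t a = π (T.es.ρ a x))
    (hst : ∀ p : T.SigmaKappa, s p.1.1 * t p.1.2 = t (T.κ p).1.1 * s (T.κ p).1.2)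
    (α : Sρ) (a : Sη) :
    t a * star (t a) * (s α * star (s α)) =
      (∑ b : Sη,
        if ∃ h : (∃ x, T.es.ρ b (T.rs.ρ α x) ≠ 0), (T.κ ⟨(α, b), h⟩).1.1 = a then
          s α * (t b * star (t b)) * star (s α)
        else 0) ∧
    Commute (t a * star (t a)) (s α * star (s α)) := by
  have hsum : t a * star (t a) * (s α * star (s α)) =
      ∑ b, t a * star (t a) * (s α * (t b * star (t b)) * star (s α)) := by
    rw [← Finset.mul_sum, ← Finset.sum_mul, ← Finset.mul_sum, ht1, mul_one]
  simp only [T.mul_star_mul_conj_mul_star_eq_ite π htpi hs3 ht1 ht3 hst] at hsum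
  refine ⟨hsum, IsSelfAdjoint.commute_of_mul_eq_isSelfAdjoint _ _ _ (.mul_star_self _)
    (.mul_star_self _) (isSelfAdjoint_sum _ fun b _ => ?_) hsum⟩
  split_ifs
  exacts [(IsSelfAdjoint.mul_star_self (t b)).conjugate (s α), .zero _]

/-- `t_a t_a* s_α s_α* = Σ_b s_α t_b t_b* s_α*` over `b` with
`(α,b) ∈ Σ^{ρη}`, `κ(α,b) = (a,β)` for some `β`; in particular `t_a t_a*` commutes
with `s_α s_α*`. -/
theorem range_projections_commute
    (T : CTDS A Sρ Sη)
    (π : A →⋆ₐ[ℂ] B) (hπ : Function.Injective π)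
    (s : Sρ → B) (t : Sη → B)
    (hspi : ∀ α, s α * star (s α) * s α = s α)
    (htpi : ∀ a, t a * star (t a) * t a = t a)
    (hs1 : ∑ β, s β * star (s β) = 1)
    (hs2 : ∀ (x : A) (α : Sρ), π x * (s α * star (s α)) = s α * star (s α) * π x)
    (hs3 : ∀ (x : A) (α : Sρ), star (s α) * π x * s α = π (T.rs.ρ α x))
    (ht1 : ∑ b, t b * star (t b) = 1)
    (ht2 : ∀ (x : A) (a : Sη), π x * (t a * star (t a)) = t a * star (t a) * π x)
    (ht3 : ∀ (x : A) (a : Sη), star (t a) * π x * t a = π (T.es.ρ a x))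
    (hst : ∀ p : T.SigmaKappa, s p.1.1 * t p.1.2 = t (T.κ p).1.1 * s (T.κ p).1.2)
    (α : Sρ) (a : Sη) :
    t a * star (t a) * (s α * star (s α)) =
      (∑ b : Sη,
        if ∃ h : (∃ x, T.es.ρ b (T.rs.ρ α x) ≠ 0), (T.κ ⟨(α, b), h⟩).1.1 = a then
          s α * (t b * star (t b)) * star (s α)
        else 0) ∧
    Commute (t a * star (t a)) (s α * star (s α)) :=
  range_projections_commute_general T π s t htpi hs3 ht1 ht3 hst α a
end

section
/- Define δ^κ_ω = η_b ∘ ρ_α for ω = (α,b,a,β) ∈ Σ_κ. Then the family {δ^κ_ω}_{ω ∈ Σ_κ} makes (A, δ^κ, Σ_κ) a C*-symbolic dynamical system; explicitly: each δ^κ_ω is a nonzero *-endomorphism of A with δ^κ_ω(Z_A) ⊆ Z_A, the inequality Σ_{ω ∈ Σ_κ} δ^κ_ω(1) ≥ 1 holds in the C*-order, and for every nonzero x ∈ A there exists ω ∈ Σ_κ with δ^κ_ω(x) ≠ 0. -/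
open scoped Classical

variable (A : Type*) [NormedRing A] [StarRing A] [CStarRing A] [CompleteSpace A]
  [NormedAlgebra ℂ A] [StarModule ℂ A] [PartialOrder A] [StarOrderedRing A]

variable {A}
variable {Sρ Sη : Type*} [Fintype Sρ] [Fintype Sη]

/-! Every axiom of `δ^κ` is inherited from `ρ` and `η`. The only point needing care is the unit
inequality: the pairs `(α, b)` outside `Σ_κ` contribute `η_b(ρ_α(1)) = 0`, so `∑_ω δ^κ_ω(1)`
is `∑_b η_b(∑_α ρ_α(1))`, which dominates `∑_b η_b(1) ≥ 1` because `*`-homomorphisms are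
monotone. -/

lemma map_one_ne_zero_of_map_ne_zero {F R S : Type*} [MulOneClass R] [MulZeroClass S]
    [FunLike F R S] [MulHomClass F R S] (f : F) {x : R} (hx : f x ≠ 0) : f 1 ≠ 0 := by
  intro h
  apply hx
  rw [← one_mul x, map_mul, h, zero_mul]

namespace CTDS

variable (T : CTDS A Sρ Sη)

noncomputable def delta (ω : T.SigmaKappa) : A →⋆ₙₐ[ℂ] A := (T.es.ρ ω.1.2).comp (T.rs.ρ ω.1.1)

lemma delta_one_ne_zero (ω : T.SigmaKappa) : T.delta ω 1 ≠ 0 :=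
  map_one_ne_zero_of_map_ne_zero (T.delta ω) ω.2.choose_spec

lemma delta_mem_center (ω : T.SigmaKappa) {x : A} (hx : x ∈ Set.center A) :
    T.delta ω x ∈ Set.center A :=
  T.es.central _ _ (T.rs.central _ _ hx)

lemma exists_delta_ne_zero {x : A} (hx : x ≠ 0) : ∃ ω, T.delta ω x ≠ 0 := by
  obtain ⟨α, hα⟩ := T.rs.faithful x hx
  obtain ⟨b, hb⟩ := T.es.faithful _ hα
  exact ⟨⟨(α, b), x, hb⟩, hb⟩

lemma sum_delta_one :
    ∑ ω, T.delta ω 1 = ∑ b, T.es.ρ b (∑ α, T.rs.ρ α 1) :=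
  calc ∑ ω, T.delta ω 1
      = ∑ p : Sρ × Sη with ∃ x, T.es.ρ p.2 (T.rs.ρ p.1 x) ≠ 0, T.es.ρ p.2 (T.rs.ρ p.1 1) :=
        (Finset.sum_subtype _ (fun _ => Finset.mem_filter_univ _)
          fun p : Sρ × Sη => T.es.ρ p.2 (T.rs.ρ p.1 1)).symm
    _ = ∑ p : Sρ × Sη, T.es.ρ p.2 (T.rs.ρ p.1 1) :=
        Finset.sum_filter_of_ne fun p _ hp => ⟨1, hp⟩
    _ = ∑ b, T.es.ρ b (∑ α, T.rs.ρ α 1) := by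
        simp only [Fintype.sum_prod_type_right, map_sum]

lemma one_le_sum_delta_one : 1 ≤ ∑ ω, T.delta ω 1 := by
  rw [sum_delta_one]
  calc (1 : A) ≤ ∑ b, T.es.ρ b 1 := T.es.essential
    _ ≤ ∑ b, T.es.ρ b (∑ α, T.rs.ρ α 1) :=
      Finset.sum_le_sum fun b _ => OrderHomClass.mono (T.es.ρ b) T.rs.essential

noncomputable def deltaKappa : CSDS A T.SigmaKappa where
  ρ := T.delta
  unit_ne_zero := T.delta_one_ne_zero
  central ω _ := T.delta_mem_center ω
  essential := T.one_le_sum_delta_one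
  faithful _ := T.exists_delta_ne_zero

end CTDS

/-- The family `δ^κ_ω = η_b ∘ ρ_α` (`ω = (α,b,a,β) ∈ Σ_κ`) makes
`(A, δ^κ, Σ_κ)` a `C*`-symbolic dynamical system; explicitly, each `δ^κ_ω` is a nonzero
`*`-endomorphism preserving the center, `Σ_ω δ^κ_ω(1) ≥ 1`, and the family is faithful. -/
theorem deltaKappa_is_CSDS (T : CTDS A Sρ Sη) :
    (∃ D : CSDS A T.SigmaKappa,
        ∀ (ω : T.SigmaKappa) (x : A), D.ρ ω x = T.es.ρ ω.1.2 (T.rs.ρ ω.1.1 x)) ∧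
    (∀ ω : T.SigmaKappa,
        (fun x : A => T.es.ρ ω.1.2 (T.rs.ρ ω.1.1 x)) ≠ fun _ => (0 : A)) ∧
    (∀ ω : T.SigmaKappa, ∀ x ∈ Set.center A,
        T.es.ρ ω.1.2 (T.rs.ρ ω.1.1 x) ∈ Set.center A) ∧
    (1 ≤ ∑ ω : T.SigmaKappa, T.es.ρ ω.1.2 (T.rs.ρ ω.1.1 1)) ∧
    (∀ x : A, x ≠ 0 → ∃ ω : T.SigmaKappa, T.es.ρ ω.1.2 (T.rs.ρ ω.1.1 x) ≠ 0) :=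
  ⟨⟨T.deltaKappa, fun _ _ => rfl⟩,
    fun ω h => T.delta_one_ne_zero ω (congrFun h 1),
    fun ω _ => T.delta_mem_center ω,
    T.one_le_sum_delta_one,
    fun _ => T.exists_delta_ne_zero⟩
end
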